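/- arXiv:2509.06134 — 3 statements merged into one kernel-verified Lean document; each statement's English description precedes it below -/
import Mathlib

section
/- Let U_1,...,U_n be points in [0,1]^p, let H be a nonempty subset of {1,...,p}, and define T(t) = (1/√n) ∑_{i=1}^n ∏_{j∈H} (1_{U_{i,j} ≤ t_j} − t_j) for t in the cube [0,1]^H. Then ∫_{[0,1]^H} T(t)² dt = (1/n) ∑_{h=1}^n ∑_{i=1}^n ∏_{j∈H} ((U_{h,j}² + U_{i,j}²)/2 − max(U_{h,j}, U_{i,j}) + 1/3). -/
open Finset MeasureTheory

/-!
Expanding the square turns `T(t)²` into `(1/n) ∑_h ∑_i ∏_{j ∈ H} tent(U_{h,j}, t_j) tent(U_{i,j}, t_j)`,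
where `tent a x = 1_{a ≤ x} - x`. Each summand is a product of functions of separate coordinates, so
its integral over the cube is the product of one-dimensional integrals, and those follow from
`tent a x * tent b x = 1_{max a b ≤ x} - x 1_{a ≤ x} - x 1_{b ≤ x} + x²`.
-/

theorem ite_le_eq_indicator_Ici {α M : Type*} [Preorder α] [DecidableLE α] [Zero M]
    (f : α → M) (a : α) : (fun x => if a ≤ x then f x else 0) = (Set.Ici a).indicator f := by
  ext x; simp [Set.indicator_apply]

theorem setIntegral_Icc_ite_le {f : ℝ → ℝ} {l a u : ℝ} (hla : l ≤ a) (hau : a ≤ u) :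
    ∫ x in Set.Icc l u, (if a ≤ x then f x else 0) = ∫ x in a..u, f x := by
  have hIcc : Set.Icc l u ∩ Set.Ici a = Set.Icc a u :=
    Set.ext fun x => ⟨fun ⟨⟨_, hxu⟩, hax⟩ => ⟨hax, hxu⟩, fun ⟨hax, hxu⟩ => ⟨⟨hla.trans hax, hxu⟩, hax⟩⟩
  rw [ite_le_eq_indicator_Ici, setIntegral_indicator measurableSet_Ici, hIcc,
    integral_Icc_eq_integral_Ioc, intervalIntegral.integral_of_le hau]

theorem integrableOn_ite_le {f : ℝ → ℝ} {s : Set ℝ} (a : ℝ) (hf : IntegrableOn f s) :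
    IntegrableOn (fun x => if a ≤ x then f x else 0) s := by
  rw [ite_le_eq_indicator_Ici]
  exact hf.indicator measurableSet_Ici

theorem setIntegral_univ_pi_prod {ι E : Type*} [Fintype ι] [MeasureSpace E]
    [SigmaFinite (volume : Measure E)] (s : Set E) (f : ι → E → ℝ) :
    ∫ t in Set.univ.pi (fun _ : ι => s), ∏ i, f i (t i) = ∏ i, ∫ x in s, f i x := by
  rw [volume_pi, Measure.restrict_pi_pi, integral_fintype_prod_eq_prod]

theorem integrableOn_univ_pi_prod {ι E : Type*} [Fintype ι] [MeasureSpace E]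
    [SigmaFinite (volume : Measure E)] {s : Set E} {f : ι → E → ℝ}
    (hf : ∀ i, IntegrableOn (f i) s) :
    IntegrableOn (fun t : ι → E => ∏ i, f i (t i)) (Set.univ.pi (fun _ => s)) := by
  rw [IntegrableOn, volume_pi, Measure.restrict_pi_pi]
  exact Integrable.fintype_prod hf

noncomputable def tent (a x : ℝ) : ℝ := (if a ≤ x then 1 else 0) - x

theorem tent_mul_tent (a b x : ℝ) :
    tent a x * tent b x = (if max a b ≤ x then 1 else 0) - (if a ≤ x then x else 0)
      - (if b ≤ x then x else 0) + x ^ 2 := by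
  unfold tent
  by_cases ha : a ≤ x <;> by_cases hb : b ≤ x <;> simp [ha, hb] <;> ring

theorem integrableOn_tent_mul_tent (a b : ℝ) :
    IntegrableOn (fun x => tent a x * tent b x) (Set.Icc 0 1) := by
  simp_rw [tent_mul_tent]
  apply_rules [Integrable.sub, Integrable.add, integrableOn_ite_le, Continuous.integrableOn_Icc,
    continuous_const, continuous_id, continuous_pow]

theorem setIntegral_tent_mul_tent {a b : ℝ} (ha : a ∈ Set.Icc (0 : ℝ) 1)
    (hb : b ∈ Set.Icc (0 : ℝ) 1) :
    ∫ x in Set.Icc 0 1, tent a x * tent b x = (a ^ 2 + b ^ 2) / 2 - max a b + 1 / 3 := by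
  simp_rw [tent_mul_tent]
  rw [integral_add, integral_sub, integral_sub,
    setIntegral_Icc_ite_le (le_max_of_le_left ha.1) (max_le ha.2 hb.2),
    setIntegral_Icc_ite_le ha.1 ha.2, setIntegral_Icc_ite_le hb.1 hb.2,
    integral_Icc_eq_integral_Ioc, ← intervalIntegral.integral_of_le zero_le_one]
  · simp only [intervalIntegral.integral_const, smul_eq_mul, mul_one, integral_id, integral_pow]
    ring
  all_goals apply_rules [Integrable.sub, Integrable.add, integrableOn_ite_le,
    Continuous.integrableOn_Icc, continuous_const, continuous_id, continuous_pow]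

theorem sq_norm_empirical_tent_general (n p : ℕ)
    (U : Fin n → Fin p → ℝ) (hU : ∀ i j, U i j ∈ Set.Icc (0 : ℝ) 1)
    (H : Finset (Fin p)) :
    (∫ t in Set.univ.pi (fun _ : ↥H => Set.Icc (0 : ℝ) 1),
        ((1 / Real.sqrt n) * ∑ i : Fin n,
          ∏ j : ↥H, ((if U i j ≤ t j then (1 : ℝ) else 0) - t j)) ^ 2) =
      (1 / (n : ℝ)) * ∑ h : Fin n, ∑ i : Fin n,
        ∏ j ∈ H, ((U h j ^ 2 + U i j ^ 2) / 2 - max (U h j) (U i j) + 1 / 3) := by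
  change ∫ t : ↥H → ℝ in _, ((1 / Real.sqrt n) * ∑ i, ∏ j : ↥H, tent (U i j) (t j)) ^ 2 = _
  have hsq (t : ↥H → ℝ) : ((1 / Real.sqrt n) * ∑ i, ∏ j : ↥H, tent (U i j) (t j)) ^ 2 =
      1 / n * ∑ h, ∑ i, ∏ j : ↥H, tent (U h j) (t j) * tent (U i j) (t j) := by
    rw [mul_pow, div_pow, one_pow, Real.sq_sqrt n.cast_nonneg, sq, sum_mul_sum]
    simp_rw [prod_mul_distrib]
  have hint (h i : Fin n) :
      IntegrableOn (fun t => ∏ j : ↥H, tent (U h j) (t j) * tent (U i j) (t j))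
        (Set.univ.pi fun _ => Set.Icc 0 1) :=
    integrableOn_univ_pi_prod fun _ => integrableOn_tent_mul_tent _ _
  simp_rw [hsq]
  rw [integral_const_mul, integral_finsetSum _ fun h _ => integrable_finsetSum _ fun i _ => hint h i]
  refine congrArg _ (sum_congr rfl fun h _ => ?_)
  rw [integral_finsetSum _ fun i _ => hint h i]
  refine sum_congr rfl fun i _ => ?_
  rw [setIntegral_univ_pi_prod _ fun (j : ↥H) x => tent (U h j) x * tent (U i j) x,
    ← prod_coe_sort H]
  exact prod_congr rfl fun j _ => setIntegral_tent_mul_tent (hU h j) (hU i j)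

theorem sq_norm_empirical_tent (n p : ℕ) (hn : 1 ≤ n) (hp : 1 ≤ p)
    (U : Fin n → Fin p → ℝ) (hU : ∀ i j, U i j ∈ Set.Icc (0 : ℝ) 1)
    (H : Finset (Fin p)) (hH : H.Nonempty) :
    (∫ t in Set.univ.pi (fun _ : ↥H => Set.Icc (0 : ℝ) 1),
        ((1 / Real.sqrt n) * ∑ i : Fin n,
          ∏ j : ↥H, ((if U i j ≤ t j then (1 : ℝ) else 0) - t j)) ^ 2) =
      (1 / (n : ℝ)) * ∑ h : Fin n, ∑ i : Fin n,
        ∏ j ∈ H, ((U h j ^ 2 + U i j ^ 2) / 2 - max (U h j) (U i j) + 1 / 3) :=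
  sq_norm_empirical_tent_general n p U hU H
end

section
/- Every function g : [0,1]^p → ℝ that vanishes on the lower boundary ∂⁻C = {t ∈ [0,1]^p : t_j = 0 for some j} admits a unique decomposition g = ∑_{H ⊆ {1,...,p}} R_H, where each R_H is the H-ramp of an H-tent. -/
open Finset

/-- A point of the hypercube `[0,1]^p`. -/
def Cube (p : ℕ) := Fin p → Set.Icc (0 : ℝ) 1

/-- `T` is an `H`-tent: it depends only on the coordinates in `H` (i.e. it is a
function on the face `C_H`) and vanishes whenever some coordinate indexed by `H`
is `0` or `1`. -/
def IsTent {p : ℕ} (H : Finset (Fin p)) (T : Cube p → ℝ) : Prop :=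
  (∀ s t : Cube p, (∀ j ∈ H, s j = t j) → T s = T t) ∧
  (∀ t : Cube p, (∃ j ∈ H, (t j : ℝ) = 0 ∨ (t j : ℝ) = 1) → T t = 0)

/-- `R` is an `H`-ramp: `R t = (∏_{j ∉ H} t_j) · T(t_H)` for some `H`-tent `T`. -/
def IsRamp {p : ℕ} (H : Finset (Fin p)) (R : Cube p → ℝ) : Prop :=
  ∃ T : Cube p → ℝ, IsTent H T ∧ ∀ t : Cube p, R t = (∏ j ∈ Hᶜ, (t j : ℝ)) * T t

namespace RampAux

variable {p : ℕ}

/-- The point obtained from `t` by replacing every coordinate outside `S` by `1`. -/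
def pt (S : Finset (Fin p)) (t : Cube p) : Cube p :=
  fun j => if j ∈ S then t j else ⟨1, by constructor <;> norm_num⟩

lemma pt_coe (S : Finset (Fin p)) (t : Cube p) (j : Fin p) :
    ((pt S t j : ℝ)) = if j ∈ S then (t j : ℝ) else 1 := by
  unfold pt; split <;> rfl

lemma pt_univ (t : Cube p) : pt univ t = t := by
  funext j; simp [pt]

noncomputable def tent (g : Cube p → ℝ) (H : Finset (Fin p)) (t : Cube p) : ℝ :=
  ∑ S ∈ H.powerset,
    (-1 : ℝ) ^ ((H \ S).card) * ((∏ j ∈ H \ S, (t j : ℝ)) * g (pt S t))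

lemma neg_one_pow_sdiff_sum (A : Finset (Fin p)) :
    ∑ S ∈ A.powerset, (-1 : ℝ) ^ ((A \ S).card) = if A = ∅ then 1 else 0 := by
  have h : ∑ S ∈ A.powerset, (-1 : ℝ) ^ ((A \ S).card)
      = ∑ S ∈ A.powerset, (-1 : ℝ) ^ S.card := by
    refine Finset.sum_nbij' (fun S => A \ S) (fun S => A \ S) ?_ ?_ ?_ ?_ ?_
    · intro S hS; exact mem_powerset.2 (sdiff_subset)
    · intro S hS; exact mem_powerset.2 (sdiff_subset)
    · intro S hS
      exact Finset.sdiff_sdiff_eq_self (mem_powerset.1 hS)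
    · intro S hS
      exact Finset.sdiff_sdiff_eq_self (mem_powerset.1 hS)
    · intro S hS; rfl
  have h2 : ((∑ m ∈ A.powerset, (-1 : ℤ) ^ m.card : ℤ) : ℝ)
      = ∑ S ∈ A.powerset, (-1 : ℝ) ^ S.card := by
    push_cast; rfl
  rw [h, ← h2, Finset.sum_powerset_neg_one_pow_card]
  split <;> simp

/-- The key alternating sum over an interval of subsets. -/
lemma alt_sum (K H : Finset (Fin p)) :
    ∑ S ∈ H.powerset, (if K ⊆ S then (-1 : ℝ) ^ ((H \ S).card) else 0)
      = if K = H then 1 else 0 := by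
  by_cases hKH : K ⊆ H
  · rw [Finset.sum_ite, Finset.sum_const_zero, add_zero]
    have hbij : ∑ S ∈ (H.powerset.filter (fun S => K ⊆ S)), (-1 : ℝ) ^ ((H \ S).card)
        = ∑ S' ∈ (H \ K).powerset, (-1 : ℝ) ^ (((H \ K) \ S').card) := by
      refine Finset.sum_nbij' (fun S => S \ K) (fun S' => S' ∪ K) ?_ ?_ ?_ ?_ ?_
      · intro S hS
        rw [mem_filter, mem_powerset] at hS
        exact mem_powerset.2 (sdiff_subset_sdiff hS.1 le_rfl)
      · intro S' hS'
        rw [mem_powerset] at hS'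
        refine mem_filter.2 ⟨mem_powerset.2 ?_, subset_union_right⟩
        exact union_subset (hS'.trans sdiff_subset) hKH
      · intro S hS
        rw [mem_filter] at hS
        exact sdiff_union_of_subset hS.2
      · intro S' hS'
        rw [mem_powerset] at hS'
        have hd : Disjoint S' K := disjoint_of_subset_left hS' sdiff_disjoint
        rw [Finset.union_sdiff_cancel_right hd]
      · intro S hS
        rw [mem_filter] at hS
        have hKS := hS.2
        congr 2
        ext x
        simp only [mem_sdiff]
        constructor
        · intro hx
          exact ⟨⟨hx.1, fun hxK => hx.2 (hKS hxK)⟩, fun hxSK => hx.2 hxSK.1⟩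
        · intro hx
          exact ⟨hx.1.1, fun hxS => hx.2 ⟨hxS, hx.1.2⟩⟩
    rw [hbij, neg_one_pow_sdiff_sum]
    have hiff : H \ K = ∅ ↔ K = H := by
      rw [sdiff_eq_empty_iff_subset]
      exact ⟨fun h => Finset.Subset.antisymm hKH h, fun h => h ▸ le_rfl⟩
    by_cases h : K = H
    · rw [if_pos (hiff.2 h), if_pos h]
    · rw [if_neg (fun he => h (hiff.1 he)), if_neg h]
  · rw [if_neg (fun h : K = H => hKH (h ▸ le_rfl))]
    refine Finset.sum_eq_zero fun S hS => ?_
    rw [if_neg (fun h => hKH (h.trans (mem_powerset.1 hS)))]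

/-- Dual version with the sign measured from the lower endpoint. -/
lemma alt_sum' (K H : Finset (Fin p)) :
    ∑ S ∈ H.powerset, (if K ⊆ S then (-1 : ℝ) ^ ((S \ K).card) else 0)
      = if K = H then 1 else 0 := by
  by_cases hKH : K ⊆ H
  · rw [Finset.sum_ite, Finset.sum_const_zero, add_zero]
    have hbij : ∑ S ∈ (H.powerset.filter (fun S => K ⊆ S)), (-1 : ℝ) ^ ((S \ K).card)
        = ∑ S' ∈ (H \ K).powerset, (-1 : ℝ) ^ (S'.card) := by
      refine Finset.sum_nbij' (fun S => S \ K) (fun S' => S' ∪ K) ?_ ?_ ?_ ?_ ?_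
      · intro S hS
        rw [mem_filter, mem_powerset] at hS
        exact mem_powerset.2 (sdiff_subset_sdiff hS.1 le_rfl)
      · intro S' hS'
        rw [mem_powerset] at hS'
        refine mem_filter.2 ⟨mem_powerset.2 ?_, subset_union_right⟩
        exact union_subset (hS'.trans sdiff_subset) hKH
      · intro S hS
        rw [mem_filter] at hS
        exact sdiff_union_of_subset hS.2
      · intro S' hS'
        rw [mem_powerset] at hS'
        have hd : Disjoint S' K := disjoint_of_subset_left hS' sdiff_disjoint
        rw [Finset.union_sdiff_cancel_right hd]
      · intro S hS; rfl
    rw [hbij]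
    have h2 : ((∑ m ∈ (H \ K).powerset, (-1 : ℤ) ^ m.card : ℤ) : ℝ)
        = ∑ S' ∈ (H \ K).powerset, (-1 : ℝ) ^ S'.card := by
      push_cast; rfl
    rw [← h2, Finset.sum_powerset_neg_one_pow_card]
    have hiff : H \ K = ∅ ↔ K = H := by
      rw [sdiff_eq_empty_iff_subset]
      exact ⟨fun h => Finset.Subset.antisymm hKH h, fun h => h ▸ le_rfl⟩
    by_cases h : K = H
    · rw [if_pos (hiff.2 h), if_pos h]; norm_num
    · rw [if_neg (fun he => h (hiff.1 he)), if_neg h]; norm_num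
  · rw [if_neg (fun h : K = H => hKH (h ▸ le_rfl))]
    refine Finset.sum_eq_zero fun S hS => ?_
    rw [if_neg (fun h => hKH (h.trans (mem_powerset.1 hS)))]

lemma pt_congr {S H : Finset (Fin p)} (hS : S ⊆ H) {s t : Cube p}
    (h : ∀ j ∈ H, s j = t j) : pt S s = pt S t := by
  funext j
  unfold pt
  split
  · next hj => exact h j (hS hj)
  · rfl

lemma isTent_tent (g : Cube p → ℝ) (hg : ∀ t : Cube p, (∃ j, (t j : ℝ) = 0) → g t = 0)
    (H : Finset (Fin p)) : IsTent H (tent g H) := by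
  constructor
  · intro s t h
    unfold tent
    refine Finset.sum_congr rfl fun S hS => ?_
    rw [pt_congr (mem_powerset.1 hS) h]
    congr 2
    exact Finset.prod_congr rfl fun j hj => by rw [h j (sdiff_subset hj)]
  · rintro t ⟨j, hjH, hj0 | hj1⟩
    · refine Finset.sum_eq_zero fun S hS => ?_
      by_cases hjS : j ∈ S
      · have : g (pt S t) = 0 := hg _ ⟨j, by rw [pt_coe, if_pos hjS, hj0]⟩
        rw [this]; ring
      · have : (∏ j' ∈ H \ S, ((t j' : ℝ))) = 0 :=
          Finset.prod_eq_zero (mem_sdiff.2 ⟨hjH, hjS⟩) hj0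
        rw [this]; ring
    · have hH : H = insert j (H.erase j) := (insert_erase hjH).symm
      have hje : j ∉ H.erase j := notMem_erase j H
      unfold tent
      rw [hH, Finset.sum_powerset_insert hje, ← Finset.sum_add_distrib]
      refine Finset.sum_eq_zero fun S hS => ?_
      have hSH : S ⊆ H.erase j := mem_powerset.1 hS
      have hjS : j ∉ S := fun h => hje (hSH h)
      have hd1 : insert j (H.erase j) \ S = insert j (H.erase j \ S) := by
        ext x
        simp only [mem_sdiff, mem_insert]
        constructor
        · rintro ⟨hx1 | hx1, hx2⟩
          · exact Or.inl hx1
          · exact Or.inr ⟨hx1, hx2⟩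
        · rintro (rfl | ⟨hx1, hx2⟩)
          · exact ⟨Or.inl rfl, hjS⟩
          · exact ⟨Or.inr hx1, hx2⟩
      have hd2 : insert j (H.erase j) \ insert j S = H.erase j \ S := by
        ext x
        simp only [mem_sdiff, mem_insert, not_or]
        constructor
        · rintro ⟨hx1 | hx1, hx2, hx3⟩
          · exact absurd hx1 hx2
          · exact ⟨hx1, hx3⟩
        · rintro ⟨hx1, hx2⟩
          exact ⟨Or.inr hx1, fun h => hje (h ▸ hx1), hx2⟩
      have hjd : j ∉ H.erase j \ S := fun h => hje (mem_sdiff.1 h).1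
      have hprod : ∏ j' ∈ insert j (H.erase j) \ S, ((t j' : ℝ))
          = ∏ j' ∈ H.erase j \ S, ((t j' : ℝ)) := by
        rw [hd1, Finset.prod_insert hjd, hj1, one_mul]
      have hptsame : pt (insert j S) t = pt S t := by
        funext x
        unfold pt
        by_cases hx : x = j
        · subst hx
          rw [if_pos (mem_insert_self x S), if_neg hjS]
          exact Subtype.ext hj1
        · by_cases hxS : x ∈ S
          · rw [if_pos (mem_insert_of_mem hxS), if_pos hxS]
          · rw [if_neg (by simp [hx, hxS]), if_neg hxS]
      have hcard : (insert j (H.erase j) \ S).card = (H.erase j \ S).card + 1 := by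
        rw [hd1, Finset.card_insert_of_notMem hjd]
      rw [hcard, hd2, hprod, hptsame, pow_succ]
      ring

lemma tent_sum {ι : Type*} (A : Finset ι) (f : ι → Cube p → ℝ) (H : Finset (Fin p))
    (t : Cube p) :
    tent (fun s => ∑ K ∈ A, f K s) H t = ∑ K ∈ A, tent (f K) H t := by
  unfold tent
  simp_rw [Finset.mul_sum]
  exact Finset.sum_comm

lemma sum_ramp (g : Cube p → ℝ) (t : Cube p) :
    ∑ H ∈ (univ : Finset (Fin p)).powerset, (∏ j ∈ Hᶜ, (t j : ℝ)) * tent g H t = g t := by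
  classical
  have step1 : ∀ H ∈ (univ : Finset (Fin p)).powerset,
      (∏ j ∈ Hᶜ, (t j : ℝ)) * tent g H t
      = ∑ S ∈ (univ : Finset (Fin p)).powerset,
          (if S ⊆ H then (-1 : ℝ) ^ ((H \ S).card) else 0)
            * ((∏ j ∈ Sᶜ, (t j : ℝ)) * g (pt S t)) := by
    intro H _
    unfold tent
    rw [Finset.mul_sum]
    rw [← Finset.sum_subset (Finset.powerset_mono.2 (subset_univ H))
      (fun S _ hS => by
        rw [if_neg (fun h => hS (mem_powerset.2 h)), zero_mul])]
    refine Finset.sum_congr rfl fun S hS => ?_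
    have hSH : S ⊆ H := mem_powerset.1 hS
    rw [if_pos hSH]
    have hsplit : Sᶜ = Hᶜ ∪ (H \ S) := by
      ext x
      simp only [Finset.mem_compl, mem_union, mem_sdiff]
      constructor
      · intro hx
        by_cases hxH : x ∈ H
        · exact Or.inr ⟨hxH, hx⟩
        · exact Or.inl hxH
      · rintro (hx | ⟨_, hx⟩) h
        · exact hx (hSH h)
        · exact hx h
    have hdisj : Disjoint Hᶜ (H \ S) :=
      Finset.disjoint_left.2 fun x hx hx2 => (Finset.mem_compl.1 hx) (mem_sdiff.1 hx2).1
    rw [hsplit, Finset.prod_union hdisj]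
    ring
  rw [Finset.sum_congr rfl step1, Finset.sum_comm]
  have step2 : ∀ S ∈ (univ : Finset (Fin p)).powerset,
      ∑ H ∈ (univ : Finset (Fin p)).powerset,
        (if S ⊆ H then (-1 : ℝ) ^ ((H \ S).card) else 0)
          * ((∏ j ∈ Sᶜ, (t j : ℝ)) * g (pt S t))
      = (if S = univ then 1 else 0) * ((∏ j ∈ Sᶜ, (t j : ℝ)) * g (pt S t)) := by
    intro S _
    rw [← Finset.sum_mul, alt_sum']
  rw [Finset.sum_congr rfl step2]
  rw [Finset.sum_eq_single (univ : Finset (Fin p))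
    (fun S _ hS => by rw [if_neg hS, zero_mul])
    (fun h => absurd (mem_powerset.2 le_rfl) h)]
  rw [if_pos rfl, one_mul, compl_univ, Finset.prod_empty, one_mul, pt_univ]

lemma tent_ramp {K : Finset (Fin p)} {T : Cube p → ℝ} (hT : IsTent K T)
    (H : Finset (Fin p)) (t : Cube p) :
    tent (fun s => (∏ j ∈ Kᶜ, (s j : ℝ)) * T s) H t = if K = H then T t else 0 := by
  classical
  unfold tent
  have key : ∀ S ∈ H.powerset,
      (-1 : ℝ) ^ ((H \ S).card)
        * ((∏ j ∈ H \ S, (t j : ℝ))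
            * ((∏ j ∈ Kᶜ, ((pt S t j : ℝ))) * T (pt S t)))
      = (if K ⊆ S then (-1 : ℝ) ^ ((H \ S).card) else 0)
          * ((∏ j ∈ H \ K, (t j : ℝ)) * T t) := by
    intro S hS
    have hSH : S ⊆ H := mem_powerset.1 hS
    by_cases hKS : K ⊆ S
    · rw [if_pos hKS]
      have hTpt : T (pt S t) = T t := by
        refine hT.1 _ _ fun j hj => ?_
        unfold pt
        rw [if_pos (hKS hj)]
      have hprodc : (∏ j ∈ Kᶜ, ((pt S t j : ℝ))) = ∏ j ∈ S \ K, (t j : ℝ) := by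
        rw [Finset.prod_congr rfl (fun j _ => pt_coe S t j)]
        rw [Finset.prod_ite_mem Kᶜ S (fun j => ((t j : ℝ)))]
        congr 1
        ext x
        simp only [Finset.mem_inter, Finset.mem_compl, mem_sdiff]
        tauto
      have hsplit : H \ K = (H \ S) ∪ (S \ K) := by
        ext x
        simp only [mem_sdiff, mem_union]
        constructor
        · intro hx
          by_cases hxS : x ∈ S
          · exact Or.inr ⟨hxS, hx.2⟩
          · exact Or.inl ⟨hx.1, hxS⟩
        · rintro (⟨hx1, hx2⟩ | ⟨hx1, hx2⟩)
          · exact ⟨hx1, fun h => hx2 (hKS h)⟩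
          · exact ⟨hSH hx1, hx2⟩
      have hdisj : Disjoint (H \ S) (S \ K) :=
        Finset.disjoint_left.2 fun x hx hx2 => (mem_sdiff.1 hx).2 (mem_sdiff.1 hx2).1
      rw [hTpt, hprodc, hsplit, Finset.prod_union hdisj]
      ring
    · rw [if_neg hKS, zero_mul]
      obtain ⟨j, hjK, hjS⟩ := Finset.not_subset.1 hKS
      have : T (pt S t) = 0 := by
        refine hT.2 _ ⟨j, hjK, Or.inr ?_⟩
        rw [pt_coe, if_neg hjS]
      rw [this]
      ring
  rw [Finset.sum_congr rfl key, ← Finset.sum_mul, alt_sum]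
  by_cases h : K = H
  · rw [if_pos h, if_pos h, one_mul, h, sdiff_self]
    simp
  · rw [if_neg h, if_neg h, zero_mul]


end RampAux

/-- Every function on the hypercube vanishing on the lower boundary admits a
unique decomposition as a sum of `H`-ramps over all subsets `H` of `{1,…,p}`. -/
theorem ramp_decomposition (p : ℕ) (hp : 1 ≤ p) (g : Cube p → ℝ)
    (hg : ∀ t : Cube p, (∃ j, (t j : ℝ) = 0) → g t = 0) :
    ∃! R : Finset (Fin p) → Cube p → ℝ,
      (∀ H, IsRamp H (R H)) ∧
      ∀ t : Cube p, g t = ∑ H ∈ (Finset.univ : Finset (Fin p)).powerset, R H t := by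
  classical
  refine ⟨fun H t => (∏ j ∈ Hᶜ, (t j : ℝ)) * RampAux.tent g H t, ⟨?_, ?_⟩, ?_⟩
  · intro H
    exact ⟨RampAux.tent g H, RampAux.isTent_tent g hg H, fun t => rfl⟩
  · intro t
    exact (RampAux.sum_ramp g t).symm
  · rintro R ⟨hRamp, hSum⟩
    choose T hT hRT using hRamp
    funext H t
    have hgeq : g = fun s => ∑ K ∈ (univ : Finset (Fin p)).powerset, R K s :=
      funext fun s => hSum s
    have h1 : RampAux.tent g H t = T H t := by
      rw [hgeq, RampAux.tent_sum]
      have hterm : ∀ K ∈ (univ : Finset (Fin p)).powerset,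
          RampAux.tent (R K) H t = if K = H then T K t else 0 := by
        intro K _
        have hRK : R K = fun s => (∏ j ∈ Kᶜ, ((s j : ℝ))) * T K s := funext (hRT K)
        rw [hRK, RampAux.tent_ramp (hT K)]
      rw [Finset.sum_congr rfl hterm]
      rw [Finset.sum_eq_single H (fun K _ hK => if_neg hK)
        (fun h => absurd (mem_powerset.2 (subset_univ H)) h)]
      exact if_pos rfl
    rw [hRT H t, h1]
end

section
/- In the ramp decomposition g = ∑_{H⊆{1,...,p}} R_H of a function g : [0,1]^p → ℝ vanishing on the lower boundary, each ramp satisfies sup_{t∈[0,1]^p} |R_H(t)| ≤ K_p · sup_{t∈[0,1]^p} |g(t)|, where K_p = ∏_{j=0}^{p-1} (1 + C(p,j)) and C(p,j) is the binomial coefficient. -/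
open Finset

instance cubeNonempty {p : ℕ} : Nonempty (Cube p) :=
  ⟨fun _ => ⟨0, by norm_num⟩⟩

/-- Each ramp in the ramp decomposition of a bounded function `g` vanishing on the
lower boundary is bounded by `K_p = ∏_{j=0}^{p-1} (1 + C(p,j))` times the sup of `|g|`. -/
theorem ramp_sup_bound (p : ℕ) (hp : 1 ≤ p) (g : Cube p → ℝ)
    (hg : ∀ t : Cube p, (∃ j, (t j : ℝ) = 0) → g t = 0)
    (hbdd : BddAbove (Set.range fun t : Cube p => |g t|))
    (R : Finset (Fin p) → Cube p → ℝ)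
    (hR : ∀ H, IsRamp H (R H))
    (hsum : ∀ t : Cube p, g t = ∑ H ∈ (Finset.univ : Finset (Fin p)).powerset, R H t) :
    ∀ H, ∀ t : Cube p,
      |R H t| ≤ (∏ j ∈ Finset.range p, (1 + (p.choose j : ℝ))) * ⨆ s : Cube p, |g s| := by
  classical
  set M := ⨆ s : Cube p, |g s| with hMdef
  have hle : ∀ t : Cube p, |g t| ≤ M := fun t => le_ciSup hbdd t
  have hM0 : 0 ≤ M := le_trans (abs_nonneg _) (hle (Classical.arbitrary _))
  set B : ℕ → ℝ := fun k => ∏ j ∈ Finset.range k, (1 + (p.choose j : ℝ)) with hBdef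
  have hB1 : ∀ k, 1 ≤ B k := by
    intro k
    induction k with
    | zero => simp [hBdef]
    | succ n ih =>
      have h2 : (0:ℝ) ≤ (p.choose n : ℝ) := Nat.cast_nonneg _
      simp only [hBdef, Finset.prod_range_succ] at ih ⊢
      nlinarith
  have hB0 : ∀ k, 0 ≤ B k := fun k => le_trans zero_le_one (hB1 k)
  -- arithmetic lemma
  have harith : ∀ h : ℕ, M + ∑ k ∈ Finset.range h, (p.choose k : ℝ) * (B k * M) ≤ B h * M := by
    intro h
    induction h with
    | zero => simp [hBdef]
    | succ n ih =>
      rw [Finset.sum_range_succ]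
      have : B (n+1) * M = (1 + (p.choose n : ℝ)) * (B n * M) := by
        simp only [hBdef, Finset.prod_range_succ]; ring
      rw [this]
      nlinarith [mul_nonneg (hB0 n) hM0]
  -- monotonicity of B
  have hBmono : ∀ a b : ℕ, a ≤ b → B a ≤ B b := by
    intro a b hab
    have : B b = B a * ∏ j ∈ Finset.Ico a b, (1 + (p.choose j : ℝ)) := by
      simp only [hBdef]
      rw [Finset.prod_range_mul_prod_Ico _ hab]
    rw [this]
    have h1 : (1:ℝ) ≤ ∏ j ∈ Finset.Ico a b, (1 + (p.choose j : ℝ)) := by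
      calc (1:ℝ) = ∏ _j ∈ Finset.Ico a b, (1:ℝ) := by simp
        _ ≤ ∏ j ∈ Finset.Ico a b, (1 + (p.choose j : ℝ)) :=
            Finset.prod_le_prod (fun j _ => zero_le_one)
              (fun j _ => by nlinarith [Nat.cast_nonneg (α := ℝ) (p.choose j)])
    nlinarith [hB0 a]
  -- key bound by strong induction
  have key : ∀ H : Finset (Fin p), ∀ t : Cube p, |R H t| ≤ B H.card * M := by
    intro H
    induction H using Finset.strongInduction with
    | _ H IH =>
      intro t
      obtain ⟨T, ⟨hTconst, hTvan⟩, hTform⟩ := hR H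
      set t' : Cube p := fun j => if j ∈ H then t j else ⟨1, by norm_num⟩ with ht'def
      have ht'H : ∀ j ∈ H, t' j = t j := by intro j hj; simp [ht'def, hj]
      have ht'not : ∀ j ∉ H, (t' j : ℝ) = 1 := by intro j hj; simp [ht'def, hj]
      -- step 1 : |R H t| ≤ |R H t'|
      have hTt : T t = T t' := hTconst t t' (fun j hj => (ht'H j hj).symm)
      have h1 : |R H t| ≤ |R H t'| := by
        rw [hTform t, hTform t']
        have hprod1 : (∏ j ∈ Hᶜ, ((t' j : ℝ))) = 1 :=
          Finset.prod_eq_one (fun j hj => ht'not j (Finset.mem_compl.mp hj))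
        have hpnn : 0 ≤ ∏ j ∈ Hᶜ, ((t j : ℝ)) :=
          Finset.prod_nonneg (fun j _ => (t j).2.1)
        have hple : (∏ j ∈ Hᶜ, ((t j : ℝ))) ≤ 1 :=
          Finset.prod_le_one (fun j _ => (t j).2.1) (fun j _ => (t j).2.2)
        rw [hprod1, one_mul, ← hTt, abs_mul, abs_of_nonneg hpnn]
        nlinarith [abs_nonneg (T t)]
      -- step 2 : sum over powerset of H
      have hvan : ∀ H' ∈ (Finset.univ : Finset (Fin p)).powerset,
          H' ∉ H.powerset → R H' t' = 0 := by
        intro H' _ hns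
        rw [Finset.mem_powerset] at hns
        obtain ⟨j, hjH', hjH⟩ := Finset.not_subset.mp hns
        obtain ⟨T', ⟨hc', hv'⟩, hf'⟩ := hR H'
        rw [hf', hv' t' ⟨j, hjH', Or.inr (ht'not j hjH)⟩, mul_zero]
      have hsum' : g t' = ∑ H' ∈ H.powerset, R H' t' := by
        rw [hsum t']
        exact (Finset.sum_subset
          (fun x hx => Finset.mem_powerset.mpr (Finset.subset_univ x)) hvan).symm
      have hsplit : R H t' = g t' - ∑ H' ∈ H.powerset.erase H, R H' t' := by
        have := Finset.add_sum_erase H.powerset (fun H' => R H' t')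
          (Finset.mem_powerset_self H)
        rw [hsum']
        linarith [this]
      -- bound the erased sum via IH
      have hIHsum : ∑ H' ∈ H.powerset.erase H, |R H' t'|
          ≤ ∑ H' ∈ H.powerset.erase H, B H'.card * M := by
        apply Finset.sum_le_sum
        intro H' hH'
        have hmem := Finset.mem_of_mem_erase hH'
        have hne := Finset.ne_of_mem_erase hH'
        exact IH H' (Finset.ssubset_iff_subset_ne.mpr
          ⟨Finset.mem_powerset.mp hmem, hne⟩) t'
      -- compute the erased sum of bounds
      have hcount : ∑ H' ∈ H.powerset.erase H, B H'.card * M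
          = ∑ k ∈ Finset.range H.card, (H.card.choose k : ℝ) * (B k * M) := by
        have htot : ∑ H' ∈ H.powerset, B H'.card * M
            = ∑ k ∈ Finset.range (H.card + 1), (H.card.choose k) • (B k * M) :=
          Finset.sum_powerset_apply_card (fun k => B k * M)
        have herase : B H.card * M + ∑ H' ∈ H.powerset.erase H, B H'.card * M
            = ∑ H' ∈ H.powerset, B H'.card * M :=
          Finset.add_sum_erase H.powerset (fun H' => B H'.card * M)
            (Finset.mem_powerset_self H)
        rw [htot, Finset.sum_range_succ, Nat.choose_self, one_smul] at herase
        have : ∑ H' ∈ H.powerset.erase H, B H'.card * M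
            = ∑ k ∈ Finset.range H.card, (H.card.choose k) • (B k * M) := by
          linarith
        rw [this]
        apply Finset.sum_congr rfl
        intro k _
        rw [nsmul_eq_mul]
      -- choose comparison
      have hcardle : H.card ≤ p := by
        have := Finset.card_le_card (Finset.subset_univ H)
        simpa using this
      have hchoose : ∑ k ∈ Finset.range H.card, (H.card.choose k : ℝ) * (B k * M)
          ≤ ∑ k ∈ Finset.range H.card, (p.choose k : ℝ) * (B k * M) := by
        apply Finset.sum_le_sum
        intro k _
        have h1 : (H.card.choose k : ℝ) ≤ (p.choose k : ℝ) := by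
          exact_mod_cast Nat.choose_le_choose k hcardle
        exact mul_le_mul_of_nonneg_right h1 (mul_nonneg (hB0 k) hM0)
      have hfinal : |R H t'| ≤ B H.card * M := by
        rw [hsplit]
        calc |g t' - ∑ H' ∈ H.powerset.erase H, R H' t'|
            ≤ |g t'| + |∑ H' ∈ H.powerset.erase H, R H' t'| := abs_sub _ _
          _ ≤ M + ∑ H' ∈ H.powerset.erase H, |R H' t'| := by
              gcongr
              · exact hle t'
              · exact Finset.abs_sum_le_sum_abs _ _
          _ ≤ M + ∑ k ∈ Finset.range H.card, (p.choose k : ℝ) * (B k * M) := by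
              have := hIHsum.trans (le_of_eq hcount) |>.trans hchoose
              linarith
          _ ≤ B H.card * M := harith H.card
      exact h1.trans hfinal
  intro H t
  calc |R H t| ≤ B H.card * M := key H t
    _ ≤ B p * M := mul_le_mul_of_nonneg_right
        (hBmono H.card p (by simpa using Finset.card_le_card (Finset.subset_univ H))) hM0
end
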